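/- arXiv:2105.06000 — 6 statements merged into one kernel-verified Lean document; each statement's English description precedes it below -/
import Mathlib

section
/- Let n ≥ 1, Y ∈ M_n(ℂ) and μ, ν > 0. Then: (a) for every ξ ∈ M_n(ℂ), 𝓔_Y^{μ,ν}[ξ*] = 𝓔_Y^{μ,ν}[ξ] (J-reality); and (b) for all positive semidefinite ξ₊, ξ₋ ∈ M_n(ℂ) with ξ₊ξ₋ = 0, one has 𝓔_Y^{μ,ν}(ξ₊, ξ₋) ≤ 0 (first Beurling–Deny condition). -/
open Matrix ComplexOrder
set_option maxHeartbeats 1000000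

/-- Frobenius (Hilbert–Schmidt) inner product `⟨a,b⟩ = Tr(a* b)` on `Mₙ(ℂ)`. -/
noncomputable def finner {n : ℕ} (a b : Matrix (Fin n) (Fin n) ℂ) : ℂ :=
  (aᴴ * b).trace

/-- `μ Y x − ν x Y`, the derivation `d_Y^{μ,ν}` up to the factor `i`. -/
noncomputable def dform {n : ℕ} (Y : Matrix (Fin n) (Fin n) ℂ) (μ ν : ℝ)
    (x : Matrix (Fin n) (Fin n) ℂ) : Matrix (Fin n) (Fin n) ℂ :=
  (μ : ℂ) • (Y * x) - (ν : ℂ) • (x * Y)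

/-- The sesquilinear form `𝓔_Y^{μ,ν}(a,b) = Re(⟨d_Y^{μ,ν}a, d_Y^{μ,ν}b⟩ +
⟨d_{Y*}^{ν,μ}a, d_{Y*}^{ν,μ}b⟩)`. -/
noncomputable def Eform {n : ℕ} (Y : Matrix (Fin n) (Fin n) ℂ) (μ ν : ℝ)
    (a b : Matrix (Fin n) (Fin n) ℂ) : ℝ :=
  (finner (dform Y μ ν a) (dform Y μ ν b) +
    finner (dform Yᴴ ν μ a) (dform Yᴴ ν μ b)).re

lemma tr_re_nonneg {n : ℕ} (A : Matrix (Fin n) (Fin n) ℂ) :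
    0 ≤ ((Aᴴ * A).trace).re := by
  have : (Aᴴ * A).trace = ∑ i, ∑ j, (starRingEnd ℂ) (A j i) * A j i := by
    simp [Matrix.trace, Matrix.mul_apply, Matrix.diag, Matrix.conjTranspose_apply]
  rw [this]
  simp only [Complex.re_sum]
  apply Finset.sum_nonneg; intro i _
  apply Finset.sum_nonneg; intro j _
  rw [mul_comm, Complex.mul_conj, Complex.ofReal_re]
  exact Complex.normSq_nonneg _

lemma tr_PZMZ_nonneg {n : ℕ} {P M : Matrix (Fin n) (Fin n) ℂ}
    (hP : P.PosSemidef) (hM : M.PosSemidef) (Z : Matrix (Fin n) (Fin n) ℂ) :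
    0 ≤ ((P * Zᴴ * M * Z).trace).re := by
  obtain ⟨S, hSh, hSS⟩ : ∃ S : Matrix (Fin n) (Fin n) ℂ, Sᴴ = S ∧ S * S = P :=
    by
      open scoped MatrixOrder in
      exact ⟨CFC.sqrt P, (Matrix.nonneg_iff_posSemidef.mp (CFC.sqrt_nonneg P)).1, CFC.sqrt_mul_sqrt_self P (Matrix.nonneg_iff_posSemidef.mpr hP)⟩
  obtain ⟨T, hTh, hTT⟩ : ∃ T : Matrix (Fin n) (Fin n) ℂ, Tᴴ = T ∧ T * T = M :=
    by
      open scoped MatrixOrder in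
      exact ⟨CFC.sqrt M, (Matrix.nonneg_iff_posSemidef.mp (CFC.sqrt_nonneg M)).1, CFC.sqrt_mul_sqrt_self M (Matrix.nonneg_iff_posSemidef.mpr hM)⟩
  have key : ((T * Z * S)ᴴ * (T * Z * S)).trace = (P * Zᴴ * M * Z).trace := by
    have e1 : (T * Z * S)ᴴ * (T * Z * S) = S * ((Zᴴ * M * Z) * S) := by
      simp only [conjTranspose_mul, hSh, hTh]
      calc S * (Zᴴ * T) * (T * Z * S)
          = S * ((Zᴴ * (T * T) * Z) * S) := by simp only [Matrix.mul_assoc]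
        _ = S * ((Zᴴ * M * Z) * S) := by rw [hTT]
    rw [e1, Matrix.trace_mul_comm, Matrix.mul_assoc, hSS, Matrix.trace_mul_comm]
    simp [Matrix.mul_assoc]
  rw [← key]
  exact tr_re_nonneg _

lemma finner_expand {n : ℕ} (Y : Matrix (Fin n) (Fin n) ℂ) (μ ν : ℝ)
    {P M : Matrix (Fin n) (Fin n) ℂ} (hP : P.IsHermitian)
    (hPM : P * M = 0) (hMP : M * P = 0) :
    finner (dform Y μ ν P) (dform Y μ ν M)
      = -((μ : ℂ) * ν) * ((P * Yᴴ * M * Y).trace + (Yᴴ * P * Y * M).trace) := by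
  have z1 : ((P * Yᴴ) * (Y * M)).trace = 0 := by
    rw [Matrix.trace_mul_comm]
    have : (Y * M) * (P * Yᴴ) = 0 := by
      rw [Matrix.mul_assoc, ← Matrix.mul_assoc M P, hMP, Matrix.zero_mul,
        Matrix.mul_zero]
    rw [this, Matrix.trace_zero]
  have z2 : ((Yᴴ * P) * (M * Y)).trace = 0 := by
    have : (Yᴴ * P) * (M * Y) = 0 := by
      rw [Matrix.mul_assoc, ← Matrix.mul_assoc P M, hPM, Matrix.zero_mul,
        Matrix.mul_zero]
    rw [this, Matrix.trace_zero]
  have hc1 : ((P * Yᴴ) * (M * Y)).trace = (P * Yᴴ * M * Y).trace := by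
    rw [Matrix.mul_assoc (P * Yᴴ)]
  have hc2 : ((Yᴴ * P) * (Y * M)).trace = (Yᴴ * P * Y * M).trace := by
    rw [Matrix.mul_assoc (Yᴴ * P)]
  simp only [finner, dform, conjTranspose_sub, conjTranspose_smul, conjTranspose_mul,
    hP.eq, Complex.star_def, Complex.conj_ofReal, Matrix.sub_mul, Matrix.mul_sub,
    smul_mul_assoc, Matrix.mul_smul, Matrix.trace_sub, Matrix.trace_smul, smul_smul]
  rw [z1] at *
  simp only [hc1, hc2, z1, z2, smul_zero]
  push_cast
  simp only [smul_eq_mul]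
  ring

lemma finner_neg_conjT {n : ℕ} (a : Matrix (Fin n) (Fin n) ℂ) :
    finner (-aᴴ) (-aᴴ) = finner a a := by
  simp only [finner, conjTranspose_neg, conjTranspose_conjTranspose,
    Matrix.neg_mul, Matrix.mul_neg, neg_neg]
  exact Matrix.trace_mul_comm a aᴴ

/-- J-reality and the first Beurling–Deny condition for `𝓔_Y^{μ,ν}`. -/
theorem stmt_2 {n : ℕ} (hn : 1 ≤ n) (Y : Matrix (Fin n) (Fin n) ℂ)
    (μ ν : ℝ) (hμ : 0 < μ) (hν : 0 < ν) :
    (∀ ξ : Matrix (Fin n) (Fin n) ℂ, Eform Y μ ν ξᴴ ξᴴ = Eform Y μ ν ξ ξ) ∧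
      (∀ ξp ξm : Matrix (Fin n) (Fin n) ℂ, ξp.PosSemidef → ξm.PosSemidef →
        ξp * ξm = 0 → Eform Y μ ν ξp ξm ≤ 0) := by
  constructor
  · intro ξ
    have hd1 : dform Y μ ν ξᴴ = -(dform Yᴴ ν μ ξ)ᴴ := by
      simp only [dform, conjTranspose_sub, conjTranspose_smul, conjTranspose_mul,
        conjTranspose_conjTranspose, Complex.star_def, Complex.conj_ofReal, neg_sub]
    have hd2 : dform Yᴴ ν μ ξᴴ = -(dform Y μ ν ξ)ᴴ := by
      simp only [dform, conjTranspose_sub, conjTranspose_smul, conjTranspose_mul,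
        conjTranspose_conjTranspose, Complex.star_def, Complex.conj_ofReal, neg_sub]
    simp only [Eform, hd1, hd2, finner_neg_conjT]
    rw [add_comm]
  · intro P M hP hM hPM
    have hMP : M * P = 0 := by
      have := congrArg conjTranspose hPM
      simpa [conjTranspose_mul, hP.1.eq, hM.1.eq] using this
    have e1 := finner_expand Y μ ν hP.1 hPM hMP
    have e2 := finner_expand Yᴴ ν μ hP.1 hPM hMP
    rw [conjTranspose_conjTranspose] at e2
    have t1 := tr_PZMZ_nonneg hP hM Y
    have t2 : 0 ≤ ((Yᴴ * P * Y * M).trace).re := by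
      have := tr_PZMZ_nonneg hP hM Yᴴ
      rw [conjTranspose_conjTranspose] at this
      have hcyc : (Yᴴ * P * Y * M).trace = (P * Y * M * Yᴴ).trace := by
        rw [Matrix.mul_assoc (Yᴴ * P), Matrix.mul_assoc Yᴴ,
          Matrix.trace_mul_comm]
        simp [Matrix.mul_assoc]
      rw [hcyc]; exact this
    have t3 := tr_PZMZ_nonneg hP hM Yᴴ
    rw [conjTranspose_conjTranspose] at t3
    have t4 : 0 ≤ ((Y * P * Yᴴ * M).trace).re := by
      have hcyc : (Y * P * Yᴴ * M).trace = (P * Yᴴ * M * Y).trace := by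
        rw [Matrix.mul_assoc (Y * P), Matrix.mul_assoc Y,
          Matrix.trace_mul_comm]
        simp [Matrix.mul_assoc]
      rw [hcyc]; exact t1
    rw [Eform, e1, e2]
    have hre : ∀ (r : ℝ) (z : ℂ), (-(r : ℂ) * z).re = -(r * z.re) := by
      intro r z
      simp [Complex.mul_re]
    push_cast
    rw [Complex.add_re]
    rw [show (-(↑μ * ↑ν) : ℂ) = -((↑(μ * ν) : ℝ) : ℂ) by push_cast; ring]
    rw [show (-(↑ν * ↑μ) : ℂ) = -((↑(ν * μ) : ℝ) : ℂ) by push_cast; ring]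
    rw [hre, hre, Complex.add_re, Complex.add_re]
    have hμν : 0 < μ * ν := mul_pos hμ hν
    nlinarith [t1, t2, t3, t4]
end

section
/- Let n ≥ 1, Y ∈ M_n(ℂ), μ, ν > 0, and let P ∈ M_n(ℂ) be a positive definite Hermitian matrix (P = ρ^{1/2} for the density matrix ρ := P², so ξ₀ := P is the cyclic vector of the corresponding faithful state). Then the following are equivalent: (i) 𝓔_Y^{μ,ν}[P] = 0; (ii) μYP = νPY; (iii) P(YP)P^{-1} = (μ/ν)·(YP), i.e. Yξ₀ is an eigenvector of the modular operator Δ^{1/2}: η ↦ PηP^{-1} with eigenvalue μ/ν. -/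
open Matrix ComplexOrder

lemma finner_self_re {n : ℕ} (a : Matrix (Fin n) (Fin n) ℂ) :
    (finner a a).re = ∑ j, ∑ i, Complex.normSq (a i j) := by
  simp only [finner, Matrix.trace, Matrix.diag, Matrix.mul_apply,
    Matrix.conjTranspose_apply, Complex.re_sum]
  congr 1; ext j; congr 1; ext i
  simp [Complex.star_def, ← Complex.normSq_eq_conj_mul_self]

lemma finner_self_re_nonneg {n : ℕ} (a : Matrix (Fin n) (Fin n) ℂ) :
    0 ≤ (finner a a).re := by
  rw [finner_self_re]
  exact Finset.sum_nonneg fun j _ => Finset.sum_nonneg fun i _ => Complex.normSq_nonneg _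

lemma finner_self_re_eq_zero {n : ℕ} (a : Matrix (Fin n) (Fin n) ℂ) :
    (finner a a).re = 0 ↔ a = 0 := by
  rw [finner_self_re]
  constructor
  · intro h
    ext i j
    have h1 := (Finset.sum_eq_zero_iff_of_nonneg (fun j _ => Finset.sum_nonneg fun i _ => Complex.normSq_nonneg _)).1 h j (by simp)
    have h2 := (Finset.sum_eq_zero_iff_of_nonneg (fun i _ => Complex.normSq_nonneg _)).1 h1 i (by simp)
    simpa using Complex.normSq_eq_zero.1 h2
  · intro h; simp [h]

/-- Conservativeness characterization: `𝓔_Y^{μ,ν}[ξ₀] = 0` iff `μ Y P = ν P Y` iff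
`Yξ₀` is an eigenvector of the modular operator `Δ^{1/2} : η ↦ PηP⁻¹` with
eigenvalue `μ/ν`. -/
theorem stmt_3 {n : ℕ} (hn : 1 ≤ n) (Y : Matrix (Fin n) (Fin n) ℂ)
    (μ ν : ℝ) (hμ : 0 < μ) (hν : 0 < ν)
    (P : Matrix (Fin n) (Fin n) ℂ) (hP : P.PosDef) :
    (Eform Y μ ν P P = 0 ↔ (μ : ℂ) • (Y * P) = (ν : ℂ) • (P * Y)) ∧
      ((μ : ℂ) • (Y * P) = (ν : ℂ) • (P * Y) ↔
        P * (Y * P) * P⁻¹ = ((μ / ν : ℝ) : ℂ) • (Y * P)) := by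
  have hPH : Pᴴ = P := hP.1
  have hdet : IsUnit P.det := (Matrix.isUnit_iff_isUnit_det P).1 hP.isUnit
  have hPinv : P * P⁻¹ = 1 := Matrix.mul_nonsing_inv P hdet
  have hνC : (ν : ℂ) ≠ 0 := by exact_mod_cast hν.ne'
  have he : dform Yᴴ ν μ P = -(dform Y μ ν P)ᴴ := by
    simp [dform, Matrix.conjTranspose_sub, Matrix.conjTranspose_smul, hPH,
      Matrix.conjTranspose_mul, Complex.star_def, Complex.conj_ofReal]
  constructor
  · constructor
    · intro h
      have h1 : (finner (dform Y μ ν P) (dform Y μ ν P)).re = 0 := by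
        have := finner_self_re_nonneg (dform Y μ ν P)
        have := finner_self_re_nonneg (dform Yᴴ ν μ P)
        have hE : Eform Y μ ν P P =
            (finner (dform Y μ ν P) (dform Y μ ν P)).re +
            (finner (dform Yᴴ ν μ P) (dform Yᴴ ν μ P)).re := by
          simp [Eform, Complex.add_re]
        linarith [hE ▸ h]
      have hd : dform Y μ ν P = 0 := (finner_self_re_eq_zero _).1 h1
      have := sub_eq_zero.1 (by simpa [dform] using hd)
      exact this
    · intro h
      have hd : dform Y μ ν P = 0 := by simp [dform, h]
      have hE : Eform Y μ ν P P =
          (finner (dform Y μ ν P) (dform Y μ ν P)).re +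
          (finner (dform Yᴴ ν μ P) (dform Yᴴ ν μ P)).re := by
        simp [Eform, Complex.add_re]
      rw [hE, he, hd]
      simp [finner]
  · have hkey : P * (Y * P) * P⁻¹ = P * Y := by
      rw [show P * (Y * P) * P⁻¹ = P * Y * (P * P⁻¹) by noncomm_ring, hPinv, Matrix.mul_one]
    rw [hkey]
    constructor
    · intro h
      have : (ν : ℂ) • (P * Y) = (μ : ℂ) • (Y * P) := h.symm
      have hc : (ν : ℂ) * ((μ / ν : ℝ) : ℂ) = (μ : ℂ) := by push_cast; field_simp
      refine smul_right_injective _ hνC ?_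
      show (ν : ℂ) • (P * Y) = (ν : ℂ) • (((μ / ν : ℝ) : ℂ) • (Y * P))
      rw [smul_smul, hc]
      exact h.symm
    · intro h
      rw [h, smul_smul]
      congr 1
      push_cast
      field_simp
end

section
/- Let n ≥ 1, let R ∈ M_n(ℂ) be positive definite Hermitian, let λ > 0, and let X ∈ M_n(ℂ) satisfy R²X = λ²XR². Then for every y ∈ M_n(ℂ): (a) R(Xy − yX)R = λX(RyR) − λ^{-1}(RyR)X; (b) R(X*y − yX*)R = λ^{-1}X*(RyR) − λ(RyR)X*; and consequently (c) 𝓔_X^λ[RyR] = ‖R(Xy − yX)R‖_F² + ‖R(X*y − yX*)R‖_F². -/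
open Matrix ComplexOrder

/-- Frobenius norm `‖a‖_F = √Tr(a* a)` on `Mₙ(ℂ)`. -/
noncomputable def fnorm {n : ℕ} (a : Matrix (Fin n) (Fin n) ℂ) : ℝ :=
  Real.sqrt (finner a a).re

/-- The Dirichlet form `𝓔_X^λ[ξ] = ‖λXξ − λ⁻¹ξX‖_F² + ‖λ⁻¹X*ξ − λξX*‖_F²`. -/
noncomputable def Elam {n : ℕ} (X : Matrix (Fin n) (Fin n) ℂ) (l : ℝ)
    (ξ : Matrix (Fin n) (Fin n) ℂ) : ℝ :=
  fnorm ((l : ℂ) • (X * ξ) - ((l⁻¹ : ℝ) : ℂ) • (ξ * X)) ^ 2 +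
    fnorm (((l⁻¹ : ℝ) : ℂ) • (Xᴴ * ξ) - (l : ℂ) • (ξ * Xᴴ)) ^ 2


lemma key {n : ℕ} (R : Matrix (Fin n) (Fin n) ℂ) (hR : R.PosDef)
    (l : ℝ) (hl : 0 < l) (X : Matrix (Fin n) (Fin n) ℂ)
    (hX : R * R * X = ((l ^ 2 : ℝ) : ℂ) • (X * (R * R))) :
    R * X = (l : ℂ) • (X * R) := by
  have hH := hR.1
  set U : Matrix (Fin n) (Fin n) ℂ := ↑hH.eigenvectorUnitary with hU
  set d := hH.eigenvalues with hd
  set D : Matrix (Fin n) (Fin n) ℂ := diagonal (fun i => (d i : ℂ)) with hD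
  have hst : R = U * D * star U := by
    exact hH.spectral_theorem
  have hU1 : star U * U = 1 := by simp [hU]
  have hU2 : U * star U = 1 := by simp [hU]
  have hU1' : ∀ A : Matrix (Fin n) (Fin n) ℂ, star U * (U * A) = A := by
    intro A; rw [← Matrix.mul_assoc, hU1, Matrix.one_mul]
  have hU2' : ∀ A : Matrix (Fin n) (Fin n) ℂ, U * (star U * A) = A := by
    intro A; rw [← Matrix.mul_assoc, hU2, Matrix.one_mul]
  set Y : Matrix (Fin n) (Fin n) ℂ := star U * X * U with hY
  have hXY : X = U * Y * star U := by
    rw [hY]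
    simp only [Matrix.mul_assoc, hU1', hU2', hU1, hU2, Matrix.mul_one]
  have hDD : D * (D * Y) = ((l ^ 2 : ℝ) : ℂ) • (Y * (D * D)) := by
    have h := hX
    rw [hst, hXY] at h
    have h2 := congrArg (fun M => star U * M * U) h
    simp only [Matrix.mul_assoc, Matrix.mul_smul, Matrix.smul_mul, hU1', hU2',
      hU1, hU2, Matrix.mul_one] at h2
    exact h2
  have hdpos : ∀ i, 0 < d i := fun i => hR.eigenvalues_pos i
  have hDY : D * Y = (l : ℂ) • (Y * D) := by
    ext i j
    have h := congrFun (congrFun hDD i) j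
    simp only [hD, Matrix.mul_assoc, diagonal_mul, mul_diagonal, Matrix.smul_apply,
      smul_eq_mul, diagonal_mul_diagonal] at h ⊢
    rcases eq_or_ne (Y i j) 0 with h0 | h0
    · simp [h0]
    · have hc : ((d i : ℂ)) * (d i) = ((l^2 : ℝ) : ℂ) * ((d j) * (d j)) := by
        have h' : ((d i : ℂ) * (d i) - ((l^2 : ℝ) : ℂ) * ((d j) * (d j))) * Y i j = 0 := by
          linear_combination h
        rcases mul_eq_zero.mp h' with h1 | h1
        · linear_combination h1
        · exact absurd h1 h0
      have hr : (d i) * (d i) = l^2 * ((d j) * (d j)) := by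
        exact_mod_cast hc
      have hde : d i = l * d j := by
        have h2 : (d i)^2 = (l * d j)^2 := by ring_nf; ring_nf at hr; linarith
        exact (sq_eq_sq₀ (le_of_lt (hdpos i)) (le_of_lt (mul_pos hl (hdpos j)))).mp h2
      have : (d i : ℂ) = (l : ℂ) * (d j : ℂ) := by exact_mod_cast hde
      rw [this]; ring
  rw [hst, hXY]
  simp only [Matrix.mul_assoc, Matrix.mul_smul, Matrix.smul_mul, hU1', hU2', hU1, hU2,
    Matrix.mul_one]
  rw [← Matrix.mul_assoc D Y, hDY]
  simp only [Matrix.smul_mul, Matrix.mul_smul, Matrix.mul_assoc]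

set_option maxHeartbeats 1000000 in
/-- Intertwining of the derivation with the symmetric embedding `i₀(y) = RyR`, and the
representation of the Dirichlet form as squares of commutators
(`d_X^λ ∘ i₀ = i₀ ∘ δ_X` and `𝓔_X^λ[i₀(y)] = ‖i₀([X,y])‖² + ‖i₀([X*,y])‖²`). -/
theorem stmt_6 {n : ℕ} (hn : 1 ≤ n) (R : Matrix (Fin n) (Fin n) ℂ) (hR : R.PosDef)
    (l : ℝ) (hl : 0 < l) (X : Matrix (Fin n) (Fin n) ℂ)
    (hX : R * R * X = ((l ^ 2 : ℝ) : ℂ) • (X * (R * R))) :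
    ∀ y : Matrix (Fin n) (Fin n) ℂ,
      (R * (X * y - y * X) * R =
        (l : ℂ) • (X * (R * y * R)) - ((l⁻¹ : ℝ) : ℂ) • ((R * y * R) * X)) ∧
      (R * (Xᴴ * y - y * Xᴴ) * R =
        ((l⁻¹ : ℝ) : ℂ) • (Xᴴ * (R * y * R)) - (l : ℂ) • ((R * y * R) * Xᴴ)) ∧
      Elam X l (R * y * R) =
        fnorm (R * (X * y - y * X) * R) ^ 2 + fnorm (R * (Xᴴ * y - y * Xᴴ) * R) ^ 2 := by
  have h1 : R * X = (l : ℂ) • (X * R) := key R hR l hl X hX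
  have hl0 : (l : ℂ) ≠ 0 := by exact_mod_cast hl.ne'
  have hinv : ((l⁻¹ : ℝ) : ℂ) * (l : ℂ) = 1 := by
    push_cast
    exact inv_mul_cancel₀ hl0
  have h2 : X * R = ((l⁻¹ : ℝ) : ℂ) • (R * X) := by
    rw [h1, smul_smul, hinv, one_smul]
  have hRH : Rᴴ = R := hR.1
  have h3 : Xᴴ * R = (l : ℂ) • (R * Xᴴ) := by
    have h := congrArg conjTranspose h1
    simp only [conjTranspose_mul, conjTranspose_smul, hRH, Complex.star_def,
      Complex.conj_ofReal] at h
    exact h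
  have h4 : R * Xᴴ = ((l⁻¹ : ℝ) : ℂ) • (Xᴴ * R) := by
    rw [h3, smul_smul, hinv, one_smul]
  intro y
  have ha : R * (X * y - y * X) * R =
      (l : ℂ) • (X * (R * y * R)) - ((l⁻¹ : ℝ) : ℂ) • ((R * y * R) * X) := by
    rw [Matrix.mul_sub, Matrix.sub_mul]
    congr 1
    · rw [← Matrix.mul_assoc R X y, h1]
      simp only [Matrix.smul_mul, Matrix.mul_assoc]
    · rw [Matrix.mul_assoc R (y * X) R, Matrix.mul_assoc y X R, h2]
      simp only [Matrix.mul_smul, Matrix.smul_mul, Matrix.mul_assoc]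
  have hb : R * (Xᴴ * y - y * Xᴴ) * R =
      ((l⁻¹ : ℝ) : ℂ) • (Xᴴ * (R * y * R)) - (l : ℂ) • ((R * y * R) * Xᴴ) := by
    rw [Matrix.mul_sub, Matrix.sub_mul]
    congr 1
    · rw [← Matrix.mul_assoc R Xᴴ y, h4]
      simp only [Matrix.smul_mul, Matrix.mul_assoc]
    · rw [Matrix.mul_assoc R (y * Xᴴ) R, Matrix.mul_assoc y Xᴴ R, h3]
      simp only [Matrix.mul_smul, Matrix.smul_mul, Matrix.mul_assoc]
  exact ⟨ha, hb, by rw [Elam, ha, hb]⟩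
end

section
/- Let β > 0, let m ≥ 1 be an integer, and let t > 0. For k ∈ ℕ set q_k := (e^{−mβ/2} − 1)·∏_{j=1}^{m} (k + j) + (e^{mβ/2} − 1)·∏_{j=0}^{m-1} (k − j), the products taken in ℝ with k, j cast from ℕ. Then the series ∑_{k=0}^{∞} exp(−t·q_k) converges (i.e. the family (exp(−t q_k))_{k∈ℕ} is summable). -/
open Polynomial Finset Filter Real

private lemma aux_poly_tendsto (p : Polynomial ℝ) (m : ℕ) (hm : 1 ≤ m)
    (hd : p.degree ≤ (m : ℕ)) (hc : 0 < p.coeff m) :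
    Filter.Tendsto (fun x : ℝ => p.eval x) Filter.atTop Filter.atTop := by
  have hne : p.coeff m ≠ 0 := ne_of_gt hc
  have h1 : m ≤ p.natDegree := le_natDegree_of_ne_zero hne
  have h2 : p.natDegree ≤ m := natDegree_le_iff_degree_le.mpr hd
  have hnd : p.natDegree = m := le_antisymm h2 h1
  have hp0 : p ≠ 0 := fun h => by simp [h] at hne
  have hdeg : p.degree = (m : ℕ) := by
    rw [degree_eq_natDegree hp0, hnd]
  apply tendsto_atTop_of_leadingCoeff_nonneg
  · rw [hdeg]
    exact_mod_cast Nat.lt_of_lt_of_le Nat.zero_lt_one hm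
  · rw [Polynomial.leadingCoeff, hnd]
    exact hc.le

/-- Theorem 5.2 i): subexponential spectral growth, `∑ₖ e^{-t qₖ} < ∞` for the
eigenvalues `qₖ` of `Q_{X_m}^{λ_m}`. -/
theorem stmt_14 (β : ℝ) (hβ : 0 < β) (m : ℕ) (hm : 1 ≤ m) (t : ℝ) (ht : 0 < t) :
    Summable (fun k : ℕ =>
      Real.exp (-t *
        ((Real.exp (-(m : ℝ) * β / 2) - 1) * ∏ j ∈ Finset.Icc 1 m, ((k : ℝ) + (j : ℝ)) +
          (Real.exp ((m : ℝ) * β / 2) - 1) * ∏ j ∈ Finset.range m, ((k : ℝ) - (j : ℝ))))) := by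
  have hm0 : (0:ℝ) < (m:ℝ) := by exact_mod_cast Nat.lt_of_lt_of_le Nat.zero_lt_one hm
  set a : ℝ := (m:ℝ) * β / 2 with ha_def
  have ha : 0 < a := by positivity
  set B : Polynomial ℝ := ∏ j ∈ Finset.Icc 1 m, (X + C (j:ℝ)) with hB_def
  set P : Polynomial ℝ := ∏ j ∈ Finset.range m, (X - C (j:ℝ)) with hP_def
  set p : Polynomial ℝ := C (Real.exp (-a) - 1) * B + C (Real.exp a - 1) * P with hp_def
  have heval : ∀ k : ℕ, p.eval (k:ℝ) =
      (Real.exp (-(m : ℝ) * β / 2) - 1) * ∏ j ∈ Finset.Icc 1 m, ((k : ℝ) + (j : ℝ)) +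
        (Real.exp ((m : ℝ) * β / 2) - 1) * ∏ j ∈ Finset.range m, ((k : ℝ) - (j : ℝ)) := by
    intro k
    rw [show -(m:ℝ) * β / 2 = -a from by rw [ha_def]; ring]
    rw [hp_def, hB_def, hP_def, eval_add, eval_mul, eval_mul, eval_C, eval_C,
      eval_prod, eval_prod]
    simp only [eval_add, eval_sub, eval_X, eval_C]
    rw [← ha_def]
  -- degrees of the building blocks
  have hBmon : B.Monic := monic_prod_of_monic _ _ (fun j _ => monic_X_add_C _)
  have hPmon : P.Monic := monic_prod_of_monic _ _ (fun j _ => monic_X_sub_C _)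
  have hBdeg : B.natDegree = m := by
    rw [hB_def, natDegree_prod_of_monic _ _ (fun j _ => monic_X_add_C _)]
    calc ∑ i ∈ Finset.Icc 1 m, (X + C (i:ℝ)).natDegree
        = ∑ i ∈ Finset.Icc 1 m, 1 :=
          Finset.sum_congr rfl (fun i _ => natDegree_X_add_C _)
      _ = m := by simp
  have hPdeg : P.natDegree = m := by
    rw [hP_def, natDegree_prod_of_monic _ _ (fun j _ => monic_X_sub_C _)]
    calc ∑ i ∈ Finset.range m, (X - C (i:ℝ)).natDegree
        = ∑ i ∈ Finset.range m, 1 :=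
          Finset.sum_congr rfl (fun i _ => natDegree_X_sub_C _)
      _ = m := by simp
  have hBc : B.coeff m = 1 := by rw [← hBdeg]; exact hBmon.coeff_natDegree
  have hPc : P.coeff m = 1 := by rw [← hPdeg]; exact hPmon.coeff_natDegree
  set L : ℝ := Real.exp a + Real.exp (-a) - 2 with hL_def
  have hLpos : 0 < L := by
    have h1 : 1 < Real.exp a := by
      calc (1:ℝ) = Real.exp 0 := by simp
        _ < Real.exp a := Real.exp_lt_exp.mpr ha
    have h2 : Real.exp (-a) < 1 := by
      calc Real.exp (-a) < Real.exp 0 := Real.exp_lt_exp.mpr (by linarith)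
        _ = 1 := by simp
    have h3 : Real.exp a * Real.exp (-a) = 1 := by
      rw [← Real.exp_add]; simp
    rw [hL_def]
    nlinarith
  have hpc : p.coeff m = L := by
    rw [hp_def, hL_def, coeff_add, coeff_C_mul, coeff_C_mul, hBc, hPc]
    ring
  have hBdegle : B.degree ≤ (m:ℕ) := by
    rw [← hBdeg]; exact degree_le_natDegree
  have hPdegle : P.degree ≤ (m:ℕ) := by
    rw [← hPdeg]; exact degree_le_natDegree
  have hpdeg : p.degree ≤ (m:ℕ) := by
    rw [hp_def]
    refine le_trans (degree_add_le _ _) (max_le ?_ ?_)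
    · refine le_trans (degree_mul_le _ _) ?_
      calc (C (Real.exp (-a) - 1)).degree + B.degree ≤ 0 + (m:ℕ) :=
            add_le_add degree_C_le hBdegle
        _ = (m:ℕ) := zero_add _
    · refine le_trans (degree_mul_le _ _) ?_
      calc (C (Real.exp a - 1)).degree + P.degree ≤ 0 + (m:ℕ) :=
            add_le_add degree_C_le hPdegle
        _ = (m:ℕ) := zero_add _
  -- shifted polynomial
  set q : Polynomial ℝ := p - C (L/2) * X^m with hq_def
  have hqc : q.coeff m = L - L/2 := by
    rw [hq_def, coeff_sub, hpc, coeff_C_mul, coeff_X_pow, if_pos rfl, mul_one]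
  have hqdeg : q.degree ≤ (m:ℕ) := by
    rw [hq_def]
    refine le_trans (degree_sub_le _ _) (max_le hpdeg ?_)
    refine le_trans (degree_mul_le _ _) ?_
    calc (C (L/2)).degree + (X^m : Polynomial ℝ).degree ≤ 0 + (m:ℕ) :=
          add_le_add degree_C_le (degree_X_pow_le m)
      _ = (m:ℕ) := zero_add _
  have hqtend := aux_poly_tendsto q m hm hqdeg (by rw [hqc]; linarith)
  have hcast : Filter.Tendsto (fun k : ℕ => (k:ℝ)) Filter.atTop Filter.atTop :=
    tendsto_natCast_atTop_atTop
  -- eventually p.eval k ≥ (L/2) * k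
  have hev : ∀ᶠ k : ℕ in Filter.atTop, (L/2) * (k:ℝ) ≤ p.eval (k:ℝ) := by
    have h0 : ∀ᶠ x : ℝ in Filter.atTop, (0:ℝ) ≤ q.eval x := hqtend.eventually_ge_atTop 0
    filter_upwards [hcast.eventually h0, Filter.eventually_ge_atTop 1] with k hk hk1
    have hq' : (L/2) * (k:ℝ)^m ≤ p.eval (k:ℝ) := by
      rw [hq_def] at hk
      simp only [eval_sub, eval_mul, eval_C, eval_pow, eval_X] at hk
      linarith
    have hk1' : (1:ℝ) ≤ (k:ℝ) := by exact_mod_cast hk1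
    have hpow : (k:ℝ) ≤ (k:ℝ)^m := le_self_pow₀ hk1' (by omega)
    calc (L/2) * (k:ℝ) ≤ (L/2) * (k:ℝ)^m :=
          mul_le_mul_of_nonneg_left hpow (by linarith)
      _ ≤ p.eval (k:ℝ) := hq'
  obtain ⟨N, hN⟩ := Filter.eventually_atTop.mp hev
  set c : ℝ := -(t * (L/2)) with hc_def
  have hcneg : c < 0 := by rw [hc_def]; nlinarith
  have hgsum : Summable (fun k : ℕ => Real.exp ((k:ℝ) * c)) :=
    Real.summable_exp_nat_mul_iff.mpr hcneg
  rw [← summable_nat_add_iff N]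
  refine Summable.of_nonneg_of_le (fun k => (Real.exp_pos _).le) (fun k => ?_) hgsum
  rw [← heval]
  have h1 : (L/2) * ((k + N : ℕ):ℝ) ≤ p.eval ((k + N : ℕ):ℝ) := hN (k + N) (by omega)
  have h2 : -t * p.eval ((k + N : ℕ):ℝ) ≤ ((k + N : ℕ):ℝ) * c := by
    rw [hc_def]
    nlinarith [mul_le_mul_of_nonneg_left h1 ht.le]
  have h3 : ((k + N : ℕ):ℝ) * c ≤ (k:ℝ) * c := by
    have : (k:ℝ) ≤ ((k + N : ℕ):ℝ) := by push_cast; linarith [Nat.cast_nonneg (α := ℝ) N]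
    nlinarith
  exact Real.exp_le_exp.mpr (le_trans h2 h3)
end

section
/- For every real number s, the function t ↦ e^{ist}/(e^{πt} + e^{−πt}) is integrable on ℝ and ∫_{ℝ} e^{ist}/(e^{πt} + e^{−πt}) dt = 1/(e^{s/2} + e^{−s/2}). -/
open Real Complex

namespace Sech15

open MeasureTheory Set

noncomputable def φ (t : ℝ) : ℝ := (1 + Real.exp (-(2 * π * t)))⁻¹

noncomputable def φ' (t : ℝ) : ℝ :=
  2 * π * Real.exp (-(2 * π * t)) / (1 + Real.exp (-(2 * π * t))) ^ 2

noncomputable def aa (s : ℝ) : ℂ := ((1/2 : ℝ) : ℂ) + Complex.I * ((s / (2 * π) : ℝ) : ℂ)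

lemma one_add_exp_pos (t : ℝ) : 0 < 1 + Real.exp (-(2 * π * t)) := by positivity

lemma φ_pos (t : ℝ) : 0 < φ t := by rw [φ]; positivity

lemma φ_lt_one (t : ℝ) : φ t < 1 := by
  rw [φ]
  have h := Real.exp_pos (-(2 * π * t))
  rw [inv_lt_one_iff₀]
  right; linarith

lemma one_sub_φ (t : ℝ) :
    1 - φ t = Real.exp (-(2 * π * t)) / (1 + Real.exp (-(2 * π * t))) := by
  have h := one_add_exp_pos t
  rw [φ]; field_simp; ring

lemma hasDerivAt_φ (t : ℝ) : HasDerivAt φ (φ' t) t := by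
  have h1 : HasDerivAt (fun t : ℝ => 1 + Real.exp (-(2 * π * t)))
      (Real.exp (-(2 * π * t)) * -(2 * π)) t := by
    have h0 : HasDerivAt (fun t : ℝ => -(2 * π * t)) (-(2 * π)) t := by
      simpa using ((hasDerivAt_id t).const_mul (2 * π)).fun_neg
    exact (h0.exp).const_add 1
  have h2 : HasDerivAt (fun t : ℝ => (1 + Real.exp (-(2 * π * t)))⁻¹)
      (-(Real.exp (-(2 * π * t)) * -(2 * π)) / (1 + Real.exp (-(2 * π * t))) ^ 2) t :=
    h1.fun_inv (ne_of_gt (one_add_exp_pos t))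
  convert h2 using 1
  · rfl
  rw [φ']
  field_simp

lemma φ_injective : Function.Injective φ := by
  intro t1 t2 h
  rw [φ, φ, inv_inj] at h
  have h' : Real.exp (-(2 * π * t1)) = Real.exp (-(2 * π * t2)) := by linarith
  have := Real.exp_eq_exp.mp h'
  have hπ := Real.pi_pos
  have h2 : 2 * π * t1 = 2 * π * t2 := by linarith
  exact mul_left_cancel₀ (by positivity) h2

lemma φ_range : Set.range φ = Ioo (0 : ℝ) 1 := by
  ext u
  constructor
  · rintro ⟨t, rfl⟩; exact ⟨φ_pos t, φ_lt_one t⟩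
  · rintro ⟨hu0, hu1⟩
    refine ⟨-(Real.log (1 / u - 1)) / (2 * π), ?_⟩
    have hπ := Real.pi_pos
    have h : 0 < 1 / u - 1 := by
      have : 1 < 1 / u := (one_lt_div hu0).mpr hu1
      linarith
    rw [φ]
    have harg : -(2 * π * (-(Real.log (1 / u - 1)) / (2 * π))) = Real.log (1 / u - 1) := by
      field_simp
    rw [harg, Real.exp_log h]
    field_simp
    ring

lemma denom_pos (t : ℝ) : 0 < Real.exp (π * t) + Real.exp (-(π * t)) := by positivity

lemma denom_ne_zero (t : ℝ) :
    ((Real.exp (π * t) : ℂ) + (Real.exp (-(π * t)) : ℂ)) ≠ 0 := by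
  have h := denom_pos t
  have h2 : ((Real.exp (π * t) : ℂ) + (Real.exp (-(π * t)) : ℂ))
      = ((Real.exp (π * t) + Real.exp (-(π * t)) : ℝ) : ℂ) := by push_cast; ring
  rw [h2]
  exact Complex.ofReal_ne_zero.mpr (ne_of_gt h)

noncomputable def F (s : ℝ) : ℝ → ℂ := fun t =>
  Complex.exp (Complex.I * s * t) /
    ((Real.exp (π * t) : ℂ) + (Real.exp (-(π * t)) : ℂ))

lemma norm_F (s t : ℝ) : ‖F s t‖ = (Real.exp (π * t) + Real.exp (-(π * t)))⁻¹ := by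
  rw [F, norm_div]
  have h1 : ‖Complex.exp (Complex.I * s * t)‖ = 1 := by
    rw [Complex.norm_exp]
    simp
  have h2 : ((Real.exp (π * t) : ℂ) + (Real.exp (-(π * t)) : ℂ))
      = ((Real.exp (π * t) + Real.exp (-(π * t)) : ℝ) : ℂ) := by push_cast; ring
  rw [h1, h2, Complex.norm_real, Real.norm_eq_abs, abs_of_pos (denom_pos t), one_div]

lemma F_continuous (s : ℝ) : Continuous (F s) := by
  apply Continuous.div
  · exact Complex.continuous_exp.comp (by continuity)
  · continuity
  · exact fun t => denom_ne_zero t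

lemma F_integrable (s : ℝ) : Integrable (F s) := by
  have hm := (F_continuous s).aestronglyMeasurable (μ := MeasureTheory.volume)
  rw [← integrableOn_univ, ← Set.Iic_union_Ioi (a := (0 : ℝ))]
  apply IntegrableOn.union
  · refine Integrable.mono' (integrableOn_exp_Iic 0) hm.restrict ?_
    filter_upwards [ae_restrict_mem measurableSet_Iic] with t ht
    rw [norm_F]
    have hπ1 : (1 : ℝ) ≤ π := by linarith [Real.pi_gt_three]
    have h1 : Real.exp (-(π * t)) ≤ Real.exp (π * t) + Real.exp (-(π * t)) := by
      linarith [Real.exp_pos (π * t)]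
    have h2 : (Real.exp (π * t) + Real.exp (-(π * t)))⁻¹ ≤ (Real.exp (-(π * t)))⁻¹ :=
      inv_anti₀ (Real.exp_pos _) h1
    rw [← Real.exp_neg] at h2
    refine h2.trans (Real.exp_le_exp.mpr ?_)
    simp only [neg_neg]
    nlinarith [mem_Iic.mp ht]
  · refine Integrable.mono' (exp_neg_integrableOn_Ioi 0 one_pos) hm.restrict ?_
    filter_upwards [ae_restrict_mem measurableSet_Ioi] with t ht
    rw [norm_F]
    have h1 : Real.exp (π * t) ≤ Real.exp (π * t) + Real.exp (-(π * t)) := by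
      linarith [Real.exp_pos (-(π * t))]
    have h2 : (Real.exp (π * t) + Real.exp (-(π * t)))⁻¹ ≤ (Real.exp (π * t))⁻¹ :=
      inv_anti₀ (Real.exp_pos _) h1
    rw [← Real.exp_neg] at h2
    refine h2.trans (Real.exp_le_exp.mpr ?_)
    have hπ1 : (1 : ℝ) ≤ π := by linarith [Real.pi_gt_three]
    have ht' : (0 : ℝ) < t := mem_Ioi.mp ht
    nlinarith

lemma pointwise (s t : ℝ) :
    |φ' t| • ((1 / (2 * π) : ℝ) •
      (((φ t : ℝ) : ℂ) ^ (aa s - 1) * (1 - ((φ t : ℝ) : ℂ)) ^ ((1 - aa s) - 1))) = F s t := by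
  have hπ := Real.pi_pos
  have hπC : ((π : ℝ) : ℂ) ≠ 0 := by exact_mod_cast Real.pi_ne_zero
  set E := Real.exp (-(2 * π * t)) with hEdef
  have hE : 0 < E := Real.exp_pos _
  have h1E : 0 < 1 + E := by linarith
  set L := Real.log (1 + E) with hLdef
  have hexpL : Real.exp L = 1 + E := Real.exp_log h1E
  -- cpow identities
  have hφpos := φ_pos t
  have c1 : ((φ t : ℝ) : ℂ) ^ (aa s - 1) = Complex.exp (((-L : ℝ) : ℂ) * (aa s - 1)) := by
    rw [Complex.cpow_def_of_ne_zero (by exact_mod_cast hφpos.ne'),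
      ← Complex.ofReal_log hφpos.le]
    congr 2
    rw [φ, Real.log_inv, hLdef]
  have c2 : (1 - ((φ t : ℝ) : ℂ)) ^ ((1 - aa s) - 1)
      = Complex.exp (((-(2 * π * t) - L : ℝ) : ℂ) * ((1 - aa s) - 1)) := by
    have h1φpos : 0 < 1 - φ t := by linarith [φ_lt_one t]
    have hcast : (1 : ℂ) - ((φ t : ℝ) : ℂ) = (((1 - φ t : ℝ)) : ℂ) := by push_cast; ring
    rw [hcast, Complex.cpow_def_of_ne_zero (by exact_mod_cast h1φpos.ne'),
      ← Complex.ofReal_log h1φpos.le]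
    congr 2
    rw [one_sub_φ, Real.log_div hE.ne' h1E.ne', hEdef, Real.log_exp]
  -- jacobian
  have hjac : |φ' t| * (1 / (2 * π)) = Real.exp (-(2 * π * t) - 2 * L) := by
    have hφ'pos : 0 < φ' t := by rw [φ']; positivity
    have e2L : Real.exp (2 * L) = (1 + E) ^ 2 := by
      rw [two_mul, Real.exp_add, hexpL]; ring
    rw [abs_of_pos hφ'pos, φ', Real.exp_sub, e2L, ← hEdef]
    field_simp
  -- denominator
  have hreal : Real.exp (π * t + L) = Real.exp (π * t) + Real.exp (-(π * t)) := by
    rw [Real.exp_add, hexpL, hEdef, mul_add, mul_one, ← Real.exp_add]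
    congr 1
    ring
  have hden : ((Real.exp (π * t) : ℂ) + (Real.exp (-(π * t)) : ℂ))
      = Complex.exp (((π * t + L : ℝ) : ℂ)) := by
    rw [← Complex.ofReal_exp, hreal]
    push_cast
    ring
  -- assemble
  rw [smul_smul, c1, c2]
  rw [Complex.real_smul, hjac, Complex.ofReal_exp, ← Complex.exp_add, ← Complex.exp_add]
  rw [F, hden, ← Complex.exp_sub]
  congr 1
  rw [aa]
  push_cast
  have h2πC : ((2 : ℂ) * π) ≠ 0 := by
    intro hc
    apply hπC
    have : (2 : ℂ) ≠ 0 := two_ne_zero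
    exact (mul_eq_zero.mp hc).resolve_left this
  field_simp
  ring

end Sech15

open Sech15 MeasureTheory Set in
/-- The Fourier transform of the hyperbolic secant:
`∫ℝ e^{ist}/(e^{πt} + e^{−πt}) dt = 1/(e^{s/2} + e^{−s/2})`. -/
theorem stmt_15 (s : ℝ) :
    MeasureTheory.Integrable (fun t : ℝ =>
      Complex.exp (Complex.I * s * t) /
        ((Real.exp (Real.pi * t) : ℂ) + (Real.exp (-(Real.pi * t)) : ℂ))) ∧
    ∫ t : ℝ, Complex.exp (Complex.I * s * t) /
        ((Real.exp (Real.pi * t) : ℂ) + (Real.exp (-(Real.pi * t)) : ℂ)) =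
      1 / ((Real.exp (s / 2) : ℂ) + (Real.exp (-(s / 2)) : ℂ)) := by
  refine ⟨F_integrable s, ?_⟩
  have hπ := Real.pi_pos
  have hπC : ((π : ℝ) : ℂ) ≠ 0 := by exact_mod_cast Real.pi_ne_zero
  set g : ℝ → ℂ := fun u => (1 / (2 * π) : ℝ) •
    (((u : ℝ) : ℂ) ^ (aa s - 1) * (1 - ((u : ℝ) : ℂ)) ^ ((1 - aa s) - 1)) with hg
  have key := integral_image_eq_integral_abs_deriv_smul MeasurableSet.univ
    (fun t _ => (hasDerivAt_φ t).hasDerivWithinAt) (φ_injective.injOn) g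
  rw [image_univ, φ_range, Measure.restrict_univ] at key
  have hptw : (fun t => |φ' t| • g (φ t)) = F s := by
    funext t
    exact pointwise s t
  rw [hptw] at key
  -- evaluate the beta side
  have hbeta : (∫ u in Ioo (0:ℝ) 1, g u)
      = (1 / (2 * π) : ℝ) • Complex.betaIntegral (aa s) (1 - aa s) := by
    rw [hg, integral_smul]
    congr 1
    rw [Complex.betaIntegral, intervalIntegral.integral_of_le zero_le_one,
      MeasureTheory.integral_Ioc_eq_integral_Ioo]
  have haa_re : (aa s).re = 1/2 := by
    simp only [aa, Complex.add_re, Complex.mul_re, Complex.I_re, Complex.I_im,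
      Complex.ofReal_re, Complex.ofReal_im]
    norm_num
  have hre : 0 < (aa s).re := by rw [haa_re]; norm_num
  have hre' : 0 < (1 - aa s).re := by
    rw [Complex.sub_re, Complex.one_re, haa_re]; norm_num
  have hΓ := Complex.Gamma_mul_Gamma_eq_betaIntegral hre hre'
  rw [show aa s + (1 - aa s) = 1 by ring, Complex.Gamma_one, one_mul,
    Complex.Gamma_mul_Gamma_one_sub] at hΓ
  -- compute sin (π * aa s)
  have hsin : Complex.sin (π * aa s)
      = ((Real.exp (s / 2) : ℂ) + (Real.exp (-(s / 2)) : ℂ)) / 2 := by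
    have harg : ((π : ℝ) : ℂ) * aa s = ((π : ℝ) : ℂ) / 2 + ((s / 2 : ℝ) : ℂ) * Complex.I := by
      rw [aa]
      push_cast
      field_simp
    rw [harg, Complex.sin_add, Complex.sin_pi_div_two, Complex.cos_pi_div_two,
      Complex.cos_mul_I, ← Complex.ofReal_cosh, Real.cosh_eq]
    push_cast
    ring
  rw [hsin] at hΓ
  have hcosh_ne : ((Real.exp (s / 2) : ℂ) + (Real.exp (-(s / 2)) : ℂ)) ≠ 0 := by
    have h : (0:ℝ) < Real.exp (s / 2) + Real.exp (-(s / 2)) := by positivity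
    have h2 : ((Real.exp (s / 2) : ℂ) + (Real.exp (-(s / 2)) : ℂ))
        = ((Real.exp (s / 2) + Real.exp (-(s / 2)) : ℝ) : ℂ) := by push_cast; ring
    rw [h2]
    exact Complex.ofReal_ne_zero.mpr (ne_of_gt h)
  have : ∫ t : ℝ, F s t = (1 / (2 * π) : ℝ) •
      (((π : ℝ) : ℂ) / (((Real.exp (s / 2) : ℂ) + (Real.exp (-(s / 2)) : ℂ)) / 2)) := by
    rw [← key, hbeta, ← hΓ]
  rw [show (fun t : ℝ =>
      Complex.exp (Complex.I * s * t) /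
        ((Real.exp (Real.pi * t) : ℂ) + (Real.exp (-(Real.pi * t)) : ℂ))) = F s from rfl] at *
  have aux : ∀ p D : ℂ, p ≠ 0 → D ≠ 0 → 1 / (2 * p) * (p / (D / 2)) = 1 / D := by
    intro p D hp hD
    field_simp
  rw [this, Complex.real_smul]
  rw [show ((1 / (2 * π) : ℝ) : ℂ) = 1 / (2 * ((π : ℝ) : ℂ)) by push_cast; ring]
  exact aux _ _ hπC hcosh_ne
end

section
/- Let X be a countable type, let U, h : X → ℝ, let V : X → ℝ satisfy V(x) > 0 for all x, and let t ≥ 0. Then the following are equivalent: (i) for every u : X → ℝ such that the family (u(y)² · e^{−(U(y)+h(y))})_{y∈X} is summable, one has |u(x)| · e^{−tV(x)} ≤ (∑_{y∈X} u(y)² · e^{−(U(y)+h(y))})^{1/2} for every x ∈ X; (ii) 2·t·V(x) ≥ U(x) + h(x) for every x ∈ X. -/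
/-- Appendix Lemma 7.1: the semigroup `T_t v = e^{-tV} v` is superbounded with respect to
`m_U = e^{-U} e^{-h} m₀` (contractive from `L²(m_U)` to `L^∞`) iff `2tV ≥ U + h` pointwise. -/
theorem stmt_17 {X : Type*} [Countable X] (U h V : X → ℝ) (hV : ∀ x, 0 < V x)
    (t : ℝ) (ht : 0 ≤ t) :
    ((∀ u : X → ℝ, Summable (fun y => u y ^ 2 * Real.exp (-(U y + h y))) →
        ∀ x, |u x| * Real.exp (-t * V x) ≤
          Real.sqrt (∑' y, u y ^ 2 * Real.exp (-(U y + h y)))) ↔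
      (∀ x, U x + h x ≤ 2 * t * V x)) := by
  classical
  constructor
  · intro H x
    set u : X → ℝ := fun y => if y = x then 1 else 0 with hu
    have hterm : ∀ y, u y ^ 2 * Real.exp (-(U y + h y))
        = if y = x then Real.exp (-(U x + h x)) else 0 := by
      intro y
      by_cases hy : y = x <;> simp [hu, hy]
    have hsum : Summable (fun y => u y ^ 2 * Real.exp (-(U y + h y))) := by
      apply summable_of_ne_finset_zero (s := {x})
      intro y hy
      simp only [Finset.mem_singleton] at hy
      rw [hterm]; simp [hy]
    have htsum : (∑' y, u y ^ 2 * Real.exp (-(U y + h y))) = Real.exp (-(U x + h x)) := by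
      rw [tsum_eq_single x]
      · rw [hterm]; simp
      · intro y hy; rw [hterm]; simp [hy]
    have := H u hsum x
    rw [htsum] at this
    have hux : |u x| = 1 := by simp [hu]
    rw [hux, one_mul] at this
    have hsq : Real.sqrt (Real.exp (-(U x + h x))) = Real.exp (-(U x + h x) / 2) := by
      rw [show Real.exp (-(U x + h x)) = Real.exp (-(U x + h x) / 2) ^ 2 by
        rw [sq, ← Real.exp_add]; ring_nf]
      exact Real.sqrt_sq (Real.exp_nonneg _)
    rw [hsq] at this
    have := Real.exp_le_exp.mp this
    linarith
  · intro H u hsum x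
    have hnn : ∀ y, 0 ≤ u y ^ 2 * Real.exp (-(U y + h y)) := fun y =>
      mul_nonneg (sq_nonneg _) (Real.exp_nonneg _)
    have h1 : u x ^ 2 * Real.exp (-(U x + h x)) ≤ ∑' y, u y ^ 2 * Real.exp (-(U y + h y)) :=
      Summable.le_tsum hsum x (fun y _ => hnn y)
    have h2 : u x ^ 2 * Real.exp (-(2 * t * V x)) ≤ u x ^ 2 * Real.exp (-(U x + h x)) := by
      apply mul_le_mul_of_nonneg_left _ (sq_nonneg _)
      exact Real.exp_le_exp.mpr (neg_le_neg (H x))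
    have key : (|u x| * Real.exp (-t * V x)) ^ 2
        ≤ ∑' y, u y ^ 2 * Real.exp (-(U y + h y)) := by
      rw [mul_pow, sq_abs, sq (Real.exp _), ← Real.exp_add]
      calc u x ^ 2 * Real.exp (-t * V x + -t * V x)
          = u x ^ 2 * Real.exp (-(2 * t * V x)) := by ring_nf
        _ ≤ _ := le_trans h2 h1
    have := Real.sqrt_le_sqrt key
    rwa [Real.sqrt_sq (by positivity)] at this
end
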